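/- For a gamma-distributed random variable X with shape parameter α ∈ (0,1) and scale parameter 1/α (so that E[X] = 1), the mean residual time satisfies E[X − t | X ≥ t] ≤ 1/α for all t ≥ 0. -/

import Mathlib

/-!
By the layer-cake formula, `E[(X - t)⁺] = ∫_t^∞ P(X > u) du`. For shape `a ≤ 1` the factor
`x ^ (a - 1)` of the gamma density `f` is nonincreasing, so beyond `u > 0` the density is dominated
by `f(u) e^{-r(x - u)}`; integrating gives `P(X > u) ≤ f(u) / r`, i.e. the hazard rate is at
least `r`. Integrating this over `u > t` bounds `E[(X - t)⁺]` by `P(X > t) / r`.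
-/

open MeasureTheory ProbabilityTheory Set Real

lemma lintegral_Ioi_zero_comp_add_left (f : ℝ → ENNReal) (t : ℝ) :
    ∫⁻ s in Ioi 0, f (t + s) = ∫⁻ u in Ioi t, f u := by
  simpa using (measurePreserving_add_left volume t).setLIntegral_comp_preimage_emb
    (measurableEmbedding_addLeft t) f (Ioi t)

lemma sub_nonneg_ae_restrict_Ici (μ : Measure ℝ) (t : ℝ) :
    0 ≤ᵐ[μ.restrict (Ici t)] fun x => x - t := by
  filter_upwards [ae_restrict_mem measurableSet_Ici] with x hx
  exact sub_nonneg.2 hx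

lemma lintegral_Ici_ofReal_sub_eq_lintegral_measure_Ioi (μ : Measure ℝ) (t : ℝ) :
    ∫⁻ x in Ici t, ENNReal.ofReal (x - t) ∂μ = ∫⁻ s in Ioi 0, μ (Ioi (t + s)) := by
  rw [lintegral_eq_lintegral_meas_lt _ (sub_nonneg_ae_restrict_Ici μ t) (by fun_prop)]
  refine setLIntegral_congr_fun measurableSet_Ioi fun s hs => ?_
  have hset : {x : ℝ | s < x - t} = Ioi (t + s) := by
    ext x; simp [lt_sub_iff_add_lt, add_comm]
  rw [hset, Measure.restrict_apply measurableSet_Ioi,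
    inter_eq_self_of_subset_left (Ioi_subset_Ici (by linarith [mem_Ioi.1 hs]))]

lemma lintegral_Ici_ofReal_sub_le_of_measure_Ioi_le {f : ℝ → ENNReal} (hf : Measurable f)
    {t : ℝ} (c : ENNReal) (h : ∀ u, t < u → volume.withDensity f (Ioi u) ≤ c * f u) :
    ∫⁻ x in Ici t, ENNReal.ofReal (x - t) ∂(volume.withDensity f) ≤
      c * volume.withDensity f (Ioi t) := by
  rw [lintegral_Ici_ofReal_sub_eq_lintegral_measure_Ioi, withDensity_apply _ measurableSet_Ioi]
  calc ∫⁻ s in Ioi 0, volume.withDensity f (Ioi (t + s))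
      ≤ ∫⁻ s in Ioi 0, c * f (t + s) :=
        setLIntegral_mono' measurableSet_Ioi fun s hs => h _ (lt_add_of_pos_right t hs)
    _ = c * ∫⁻ s in Ioi 0, f (t + s) :=
        lintegral_const_mul c (hf.comp (measurable_const_add t))
    _ = c * ∫⁻ u in Ioi t, f u := by rw [lintegral_Ioi_zero_comp_add_left]

lemma lintegral_Ioi_ofReal_exp_neg_mul {r : ℝ} (hr : 0 < r) (u : ℝ) :
    ∫⁻ x in Ioi u, ENNReal.ofReal (exp (-(r * x))) = ENNReal.ofReal (exp (-(r * u)) / r) := by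
  have hint : IntegrableOn (fun x => exp (-r * x)) (Ioi u) :=
    integrableOn_exp_mul_Ioi (by linarith) u
  simp_rw [← neg_mul]
  rw [← ofReal_integral_eq_lintegral_ofReal hint (ae_of_all _ fun x => (exp_pos _).le),
    integral_exp_mul_Ioi (by linarith), neg_div_neg_eq]

lemma gammaMeasure_Ioi_le {a r u : ℝ} (ha : 0 < a) (ha1 : a ≤ 1) (hr : 0 < r) (hu : 0 < u) :
    gammaMeasure a r (Ioi u) ≤ ENNReal.ofReal (1 / r) * gammaPDF a r u := by
  have hK : 0 ≤ r ^ a / Gamma a := (div_pos (rpow_pos_of_pos hr a) (Gamma_pos_of_pos ha)).le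
  set C := r ^ a / Gamma a * u ^ (a - 1) with hC_def
  have hC : 0 ≤ C := mul_nonneg hK (rpow_pos_of_pos hu _).le
  have hpdf : ∀ x ∈ Ioi u,
      gammaPDF a r x ≤ ENNReal.ofReal C * ENNReal.ofReal (exp (-(r * x))) := by
    intro x hx
    rw [gammaPDF_of_nonneg (hu.trans hx).le, ← ENNReal.ofReal_mul hC]
    have : x ^ (a - 1) ≤ u ^ (a - 1) := rpow_le_rpow_of_nonpos hu (le_of_lt hx) (by linarith)
    gcongr
    exact mul_le_mul_of_nonneg_left this hK
  calc gammaMeasure a r (Ioi u) = ∫⁻ x in Ioi u, gammaPDF a r x :=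
        withDensity_apply _ measurableSet_Ioi
    _ ≤ ∫⁻ x in Ioi u, ENNReal.ofReal C * ENNReal.ofReal (exp (-(r * x))) :=
        setLIntegral_mono' measurableSet_Ioi hpdf
    _ = ENNReal.ofReal C * ENNReal.ofReal (exp (-(r * u)) / r) := by
        rw [lintegral_const_mul' _ _ ENNReal.ofReal_ne_top, lintegral_Ioi_ofReal_exp_neg_mul hr]
    _ = ENNReal.ofReal (1 / r) * gammaPDF a r u := by
        rw [gammaPDF_of_nonneg hu.le, ← ENNReal.ofReal_mul hC,
          ← ENNReal.ofReal_mul (by positivity), hC_def]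
        congr 1
        field_simp

/-- For a Gamma(α, scale 1/α) random variable (rate α) with shape `α ∈ (0,1)`,
the mean residual time at every age `t ≥ 0` is at most `1/α`:
`E[(X − t)·1{X ≥ t}] ≤ (1/α)·P(X ≥ t)`. -/
theorem stmt_18 (α : ℝ) (hα0 : 0 < α) (hα1 : α < 1) :
    ∀ t : ℝ, 0 ≤ t →
      (∫ x in Set.Ici t, (x - t) ∂(gammaMeasure α α)) ≤
        (1 / α) * ((gammaMeasure α α) (Set.Ici t)).toReal := by
  intro t ht
  have := isProbabilityMeasure_gammaMeasure hα0 hα0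
  rw [integral_eq_lintegral_of_nonneg_ae (sub_nonneg_ae_restrict_Ici _ t) (by fun_prop),
    ← ENNReal.toReal_ofReal (one_div_pos.2 hα0).le, ← ENNReal.toReal_mul]
  refine ENNReal.toReal_mono (by finiteness) ?_
  calc ∫⁻ x in Ici t, ENNReal.ofReal (x - t) ∂gammaMeasure α α
      ≤ ENNReal.ofReal (1 / α) * gammaMeasure α α (Ioi t) :=
        lintegral_Ici_ofReal_sub_le_of_measure_Ioi_le (measurable_gammaPDFReal α α).ennreal_ofReal
          _ fun u hu => gammaMeasure_Ioi_le hα0 hα1.le hα0 (ht.trans_lt hu)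
    _ ≤ ENNReal.ofReal (1 / α) * gammaMeasure α α (Ici t) := by
        gcongr; exact Ioi_subset_Ici_self
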